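/- Let k ≥ 2, n ≥ 2k, and k+1 ≤ p ≤ n−1 be integers. Then the spectral radius of G' = K_{p-1, n+k-p+1} ⊔ \widehat{K_{n-p+1, p-k+1}} is the largest root of P₂(x) = x⁴ − [n(n+k−p−1) + (p−1)(p−k+1)]x² + (n+k−p−1)(p−k+1)(n−p+1)(p−1). -/

import Mathlib

open SimpleGraph

/-- Spectral radius: supremum of the (real) eigenvalues of the adjacency matrix. -/
noncomputable def specRad {V : Type*} [Fintype V] [DecidableEq V] (G : SimpleGraph V) : ℝ :=
  sSup {x : ℝ | Module.End.HasEigenvalue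
    (Matrix.toLin' (@SimpleGraph.adjMatrix ℝ V G (Classical.decRel _) _ _)) x}

/-- The map on edges used by the `(x,y)`-shift: replace `y` by `x`. -/
def shiftMap {V : Type*} [DecidableEq V] (x y : V) (e : Sym2 V) : Sym2 V :=
  Sym2.map (fun v => if v = y then x else v) e

open scoped Classical in
/-- The `(x,y)`-shift of a graph. -/
noncomputable def shiftGraph {V : Type*} [DecidableEq V] (G : SimpleGraph V) (x y : V) :
    SimpleGraph V :=
  SimpleGraph.fromEdgeSet
    ((fun e => if y ∈ e ∧ x ∉ e ∧ shiftMap x y e ∉ G.edgeSet then shiftMap x y e else e) ''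
      G.edgeSet)

/-- Balanced bipartite graph on `[2n]` with parts `X = {0,…,n-1}`, `Y = {n,…,2n-1}`:
`x ∈ X` is adjacent to `y ∈ Y` iff `x < a` or `y < 2n - b`.
`bipG n (k-1) 1 = K_{k-1,n-1} ⊔ quasi-complement of K_{n-k+1,1}`. -/
def bipG (n a b : ℕ) : SimpleGraph (Fin (2*n)) where
  Adj u v := (u.val < n ∧ n ≤ v.val ∧ (u.val < a ∨ v.val < 2*n - b)) ∨
             (v.val < n ∧ n ≤ u.val ∧ (v.val < a ∨ u.val < 2*n - b))
  symm := by constructor; intro u v h; tauto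
  loopless := by constructor; intro u h; rcases h with ⟨h1, h2, -⟩ | ⟨h1, h2, -⟩ <;> omega

/-- `H` is a rainbow `k`-factor of the family `F`. -/
def IsRainbowFactor {V : Type*} {m : ℕ} (F : Fin m → SimpleGraph V) (k : ℕ)
    (H : SimpleGraph V) : Prop :=
  (∀ v, (H.neighborSet v).ncard = k) ∧
  ∃ φ : H.edgeSet ≃ Fin m, ∀ e : H.edgeSet, (e : Sym2 V) ∈ (F (φ e)).edgeSet

/-!
The vertex classes `[0, a)`, `[a, n)`, `[n, 2n - b)`, `[2n - b, 2n)` of `bipG n a b` (that is,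
`X₁, X₂, Y₁, Y₂`) form an equitable partition: the adjacency matrix is the pull-back of the
0/1 matrix `bipGQuot` along the class map. The class sums of an eigenvector with eigenvalue
`x ≠ 0` therefore form a nonzero solution of the quotient system with class sizes
`a, n - a, n - b, b`, and eliminating it gives `x⁴ - (an + (n-a)(n-b))x² + ab(n-a)(n-b) = 0`.
Conversely the largest root of this biquadratic lifts to an eigenvector constant on classes,
so it is the spectral radius. For `G'` one takes `a = p - 1`, `b = p - k + 1`.
-/

open Matrix Finset

noncomputable def biquadRoot (T D : ℝ) : ℝ := √((T + √(T ^ 2 - 4 * D)) / 2)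

lemma isGreatest_biquadRoot {T D : ℝ} (hD : 4 * D ≤ T ^ 2) (hT : 0 ≤ T) :
    IsGreatest {x | x ^ 4 - T * x ^ 2 + D = 0} (biquadRoot T D) := by
  set s := √(T ^ 2 - 4 * D)
  have hs : s ^ 2 = T ^ 2 - 4 * D := Real.sq_sqrt (by linarith)
  have hr : biquadRoot T D ^ 2 = (T + s) / 2 := Real.sq_sqrt (by positivity)
  refine ⟨show _ = _ by linear_combination (biquadRoot T D ^ 2 + (T + s) / 2 - T) * hr + hs / 4,
    fun x (hx : _ = _) => ?_⟩
  have hfac : (x ^ 2 - (T + s) / 2) * (x ^ 2 - (T - s) / 2) = 0 := by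
    linear_combination hx - hs / 4
  have hx2 : x ^ 2 ≤ (T + s) / 2 := by
    rcases mul_eq_zero.mp hfac with h | h
    · linarith
    · linarith [Real.sqrt_nonneg (T ^ 2 - 4 * D)]
  calc x ≤ √(x ^ 2) := Real.le_sqrt_of_sq_le le_rfl
    _ ≤ biquadRoot T D := Real.sqrt_le_sqrt hx2

lemma Fin.card_filter_le_and_lt {m l r : ℕ} (hr : r ≤ m) :
    #{i : Fin m | l ≤ (i : ℕ) ∧ (i : ℕ) < r} = r - l := by
  rw [← card_map Fin.valEmbedding, ← Nat.card_Ico]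
  congr 1
  ext t
  simp only [mem_map, mem_filter, mem_univ, true_and, Fin.valEmbedding_apply, mem_Ico]
  exact ⟨fun ⟨i, hi, hit⟩ => hit ▸ hi, fun h => ⟨⟨t, by omega⟩, h, rfl⟩⟩

lemma Matrix.hasEigenvalue_toLin'_iff {n R : Type*} [Fintype n] [DecidableEq n] [CommRing R]
    {M : Matrix n n R} {x : R} :
    Module.End.HasEigenvalue (toLin' M) x ↔ ∃ v, v ≠ 0 ∧ M *ᵥ v = x • v := by
  simp only [Module.End.hasEigenvalue_iff, Submodule.ne_bot_iff, Module.End.mem_eigenspace_iff,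
    toLin'_apply]
  exact exists_congr fun v => and_comm

lemma specRad_eq_of_isGreatest {V : Type*} [Fintype V] [DecidableEq V] {G : SimpleGraph V}
    [DecidableRel G.Adj] {r : ℝ}
    (h : IsGreatest {x | Module.End.HasEigenvalue (toLin' (G.adjMatrix ℝ)) x} r) :
    specRad G = r := by
  rw [specRad, ← h.csSup_eq]
  congr!

section FiberSum

variable {V ι α : Type*} [Fintype V] [DecidableEq ι]

def fiberSum [AddCommMonoid α] (π : V → ι) (v : V → α) (c : ι) : α :=
  ∑ j with π j = c, v j

lemma submatrix_mulVec_eq_comp [Fintype ι] [NonUnitalNonAssocSemiring α] (B : Matrix ι ι α)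
    (π : V → ι) (v : V → α) : B.submatrix π π *ᵥ v = (B *ᵥ fiberSum π v) ∘ π := by
  ext i
  simp only [mulVec, dotProduct, submatrix_apply, fiberSum, Function.comp_apply, mul_sum]
  rw [← sum_fiberwise univ π]
  refine sum_congr rfl fun c _ => sum_congr rfl fun j hj => ?_
  rw [(mem_filter.1 hj).2]

lemma fiberSum_comp [NonAssocSemiring α] (π : V → ι) (w : ι → α) :
    fiberSum π (w ∘ π) = fun c => (#{j | π j = c} : α) * w c := by
  ext c
  simp only [fiberSum, Function.comp_apply]
  rw [sum_congr rfl fun j hj => congrArg w (mem_filter.1 hj).2, sum_const, nsmul_eq_mul]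

lemma fiberSum_smul [NonUnitalNonAssocSemiring α] (π : V → ι) (x : α) (v : V → α) :
    fiberSum π (x • v) = x • fiberSum π v := by
  ext c
  simp only [fiberSum, Pi.smul_apply, smul_eq_mul, mul_sum]

lemma submatrix_mulVec_comp [Fintype ι] [NonAssocSemiring α] (B : Matrix ι ι α) (π : V → ι)
    (w : ι → α) :
    B.submatrix π π *ᵥ (w ∘ π) = (B *ᵥ fun c => (#{j | π j = c} : α) * w c) ∘ π := by
  rw [submatrix_mulVec_eq_comp, fiberSum_comp]

variable [Fintype ι] [NonAssocSemiring α] {B : Matrix ι ι α} {π : V → ι} {x : α}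
  {v : V → α}

lemma smul_fiberSum_of_mulVec_eq (hv : B.submatrix π π *ᵥ v = x • v) :
    x • fiberSum π v = fun c => (#{j | π j = c} : α) * (B *ᵥ fiberSum π v) c := by
  rw [← fiberSum_smul, ← hv, submatrix_mulVec_eq_comp, fiberSum_comp]

lemma fiberSum_ne_zero_of_mulVec_eq [NoZeroDivisors α] (hv : B.submatrix π π *ᵥ v = x • v)
    (hx : x ≠ 0) (hv0 : v ≠ 0) : fiberSum π v ≠ 0 := by
  intro h
  have hxv : x • v = 0 := by rw [← hv, submatrix_mulVec_eq_comp, h, mulVec_zero]; rfl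
  exact hv0 (funext fun i => (mul_eq_zero.mp (congrFun hxv i)).resolve_left hx)

end FiberSum

section BipGQuotient

def bipGQuot : Matrix (Fin 4) (Fin 4) ℝ := !![0, 0, 1, 1; 0, 0, 1, 0; 1, 1, 0, 0; 1, 0, 0, 0]

lemma bipGQuot_mulVec (S : Fin 4 → ℝ) :
    bipGQuot *ᵥ S = ![S 2 + S 3, S 2, S 0 + S 1, S 0] := by
  ext c
  fin_cases c <;> simp [bipGQuot, mulVec, dotProduct, Fin.sum_univ_four]

variable {a b n x : ℝ}

lemma biquadratic_of_bipGQuot_eigen {S : Fin 4 → ℝ} (hx : x ≠ 0) (hS : S ≠ 0)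
    (h : x • S = fun c => ![a, n - a, n - b, b] c * (bipGQuot *ᵥ S) c) :
    x ^ 4 - (a * n + (n - a) * (n - b)) * x ^ 2 + a * b * (n - a) * (n - b) = 0 := by
  have h0 : x * S 0 = a * (S 2 + S 3) := by simpa [bipGQuot_mulVec] using congrFun h 0
  have h1 : x * S 1 = (n - a) * S 2 := by simpa [bipGQuot_mulVec] using congrFun h 1
  have h2 : x * S 2 = (n - b) * (S 0 + S 1) := by simpa [bipGQuot_mulVec] using congrFun h 2
  have h3 : x * S 3 = b * S 0 := by simpa [bipGQuot_mulVec] using congrFun h 3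
  by_contra hP
  have hS0 : S 0 = 0 := by
    refine (mul_eq_zero.mp ?_).resolve_left hP
    linear_combination (x ^ 2 - (n - a) * (n - b)) * (x * h0 + a * h2 + a * h3)
      + a * (n - b) * (x * h1 + (n - a) * h2)
  have hS1 : S 1 = 0 := by
    refine (mul_eq_zero.mp ?_).resolve_left hP
    linear_combination (x ^ 2 - a * n) * (x * h1 + (n - a) * h2)
      + (n - a) * (n - b) * (x * h0 + a * h2 + a * h3)
  have hS2 : S 2 = 0 :=
    (mul_eq_zero.mp (by linear_combination h2 + (n - b) * (hS0 + hS1))).resolve_left hx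
  have hS3 : S 3 = 0 :=
    (mul_eq_zero.mp (by linear_combination h3 + b * hS0)).resolve_left hx
  exact hS (funext fun c => by fin_cases c <;> assumption)

lemma exists_bipGQuot_eigen (hx : x ^ 4 - (a * n + (n - a) * (n - b)) * x ^ 2
      + a * b * (n - a) * (n - b) = 0) :
    ∃ w : Fin 4 → ℝ, w 3 = a * (n - a) * (n - b) ∧
      bipGQuot *ᵥ (fun c => ![a, n - a, n - b, b] c * w c) = x • w := by
  refine ⟨![x * (n - a) * (n - b), x * (x ^ 2 - a * n),
    a * (n - a) * (n - b) + (n - a) * (x ^ 2 - a * n), a * (n - a) * (n - b)], rfl, ?_⟩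
  rw [bipGQuot_mulVec]
  ext c
  fin_cases c <;> simp only [Fin.isValue, Fin.zero_eta, Fin.mk_one, Fin.reduceFinMk, cons_val_zero,
    cons_val_one, Matrix.cons_val, Pi.smul_apply, smul_eq_mul]
  · ring
  · linear_combination -hx
  · ring
  · ring

end BipGQuotient

section BipG

def bipGCell (n a b : ℕ) (i : Fin (2 * n)) : Fin 4 :=
  if (i : ℕ) < a then 0 else if (i : ℕ) < n then 1 else if (i : ℕ) < 2 * n - b then 2 else 3

variable {n a b : ℕ}

lemma bipG_adj {u v : Fin (2 * n)} : (bipG n a b).Adj u v ↔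
    (u < n ∧ n ≤ v ∧ (u < a ∨ v < 2 * n - b)) ∨
      (v < n ∧ n ≤ u ∧ (v < a ∨ u < 2 * n - b)) :=
  Iff.rfl

lemma adjMatrix_bipG [DecidableRel (bipG n a b).Adj] (ha : a ≤ n) :
    (bipG n a b).adjMatrix ℝ = bipGQuot.submatrix (bipGCell n a b) (bipGCell n a b) := by
  ext i j
  have := i.isLt
  have := j.isLt
  simp only [adjMatrix_apply, bipG_adj, submatrix_apply, bipGCell, bipGQuot]
  split_ifs <;> simp only [of_apply, cons_val', Matrix.cons_val, cons_val_fin_one, cons_val_one,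
    cons_val_zero, one_ne_zero, zero_ne_one] <;> omega

lemma bipGCell_eq_iff (ha : a ≤ n) (hb : b ≤ n) (j : Fin (2 * n)) (c : Fin 4) :
    bipGCell n a b j = c ↔
      ![0, a, n, 2 * n - b] c ≤ j ∧ (j : ℕ) < ![a, n, 2 * n - b, 2 * n] c := by
  have := j.isLt
  fin_cases c <;> simp only [bipGCell] <;> split_ifs <;>
    simp only [Fin.isValue, Fin.zero_eta, Fin.mk_one, Fin.reduceFinMk, Fin.reduceEq, cons_val_zero,
      cons_val_one, Matrix.cons_val, true_iff, false_iff, not_and, not_lt] <;> omega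

lemma card_bipGCell (ha : a ≤ n) (hb : b ≤ n) (c : Fin 4) :
    (#{j | bipGCell n a b j = c} : ℝ) = ![(a : ℝ), n - a, n - b, b] c := by
  simp_rw [bipGCell_eq_iff ha hb]
  rw [Fin.card_filter_le_and_lt (by fin_cases c <;> simp only [Fin.isValue, Fin.zero_eta,
    Fin.mk_one, Fin.reduceFinMk, cons_val_zero, cons_val_one, Matrix.cons_val] <;> omega)]
  fin_cases c
  · simp
  · simp [Nat.cast_sub ha]
  · simp [show 2 * n - b - n = n - b by omega, Nat.cast_sub hb]
  · simp [show 2 * n - (2 * n - b) = b by omega]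

lemma isGreatest_specRad_bipG (ha : 0 < a) (han : a < n) (hb : 0 < b) (hbn : b < n) :
    IsGreatest {x : ℝ | x ^ 4 - (a * n + (n - a) * (n - b)) * x ^ 2
      + a * b * (n - a) * (n - b) = 0} (specRad (bipG n a b)) := by
  classical
  have ha' : (0 : ℝ) < a := Nat.cast_pos.2 ha
  have hna : (0 : ℝ) < n - a := by rw [sub_pos]; exact_mod_cast han
  have hnb : (0 : ℝ) < n - b := by rw [sub_pos]; exact_mod_cast hbn
  have hD : 4 * ((a : ℝ) * b * (n - a) * (n - b)) ≤ (a * n + (n - a) * (n - b)) ^ 2 := by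
    nlinarith [sq_nonneg ((a : ℝ) * n - (n - a) * (n - b)),
      mul_pos (mul_pos ha' hna) (mul_pos hnb hnb)]
  have hT : (0 : ℝ) ≤ a * n + (n - a) * (n - b) := by positivity
  obtain ⟨hroot, hmax⟩ := isGreatest_biquadRoot hD hT
  rw [specRad_eq_of_isGreatest ⟨?_, ?_⟩]
  · exact ⟨hroot, hmax⟩
  · obtain ⟨w, hw3, hw⟩ := exists_bipGQuot_eigen hroot
    refine hasEigenvalue_toLin'_iff.2 ⟨w ∘ bipGCell n a b, fun h => ?_, ?_⟩
    · have hcell : bipGCell n a b ⟨2 * n - 1, by omega⟩ = 3 :=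
        (bipGCell_eq_iff han.le hbn.le _ 3).2 (by simp only [Matrix.cons_val]; omega)
      have := congrFun h ⟨2 * n - 1, by omega⟩
      simp only [Function.comp_apply, hcell, hw3, Pi.zero_apply] at this
      exact (mul_pos (mul_pos ha' hna) hnb).ne' this
    · rw [adjMatrix_bipG han.le, submatrix_mulVec_comp]
      simp only [card_bipGCell han.le hbn.le, hw]
      rfl
  · intro y hy
    obtain ⟨v, hv0, hv⟩ := hasEigenvalue_toLin'_iff.1 hy
    rcases eq_or_ne y 0 with rfl | hy0
    · exact Real.sqrt_nonneg _
    rw [adjMatrix_bipG han.le] at hv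
    have hS := smul_fiberSum_of_mulVec_eq hv
    simp only [card_bipGCell han.le hbn.le] at hS
    exact hmax (biquadratic_of_bipGQuot_eigen hy0 (fiberSum_ne_zero_of_mulVec_eq hv hy0 hv0) hS)

end BipG

theorem stmt2_general (n k p : ℕ) (hk : 2 ≤ k) (hp1 : k+1 ≤ p) (hp2 : p ≤ n-1) :
    (specRad (bipG n (p-1) (p-k+1)))^4
        - ((n:ℝ)*((n:ℝ)+(k:ℝ)-(p:ℝ)-1) + ((p:ℝ)-1)*((p:ℝ)-(k:ℝ)+1))
            * (specRad (bipG n (p-1) (p-k+1)))^2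
        + ((n:ℝ)+(k:ℝ)-(p:ℝ)-1)*((p:ℝ)-(k:ℝ)+1)*((n:ℝ)-(p:ℝ)+1)*((p:ℝ)-1) = 0 ∧
      ∀ x : ℝ, x^4 - ((n:ℝ)*((n:ℝ)+(k:ℝ)-(p:ℝ)-1) + ((p:ℝ)-1)*((p:ℝ)-(k:ℝ)+1)) * x^2
        + ((n:ℝ)+(k:ℝ)-(p:ℝ)-1)*((p:ℝ)-(k:ℝ)+1)*((n:ℝ)-(p:ℝ)+1)*((p:ℝ)-1) = 0 →
        x ≤ specRad (bipG n (p-1) (p-k+1)) := by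
  obtain ⟨hroot, hmax⟩ := isGreatest_specRad_bipG (n := n) (a := p - 1) (b := p - k + 1)
    (by omega) (by omega) (by omega) (by omega)
  have ha : ((p - 1 : ℕ) : ℝ) = p - 1 := by rw [Nat.cast_sub (by omega), Nat.cast_one]
  have hb : ((p - k + 1 : ℕ) : ℝ) = p - k + 1 := by
    rw [Nat.cast_add, Nat.cast_sub (by omega), Nat.cast_one]
  rw [Set.mem_ofPred_eq, ha, hb] at hroot
  refine ⟨by linear_combination hroot, fun x hx => hmax ?_⟩
  rw [Set.mem_ofPred_eq, ha, hb]
  linear_combination hx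

/-- ρ(G') is the largest root of
P₂(x) = x⁴ − [n(n+k−p−1)+(p−1)(p−k+1)]x² + (n+k−p−1)(p−k+1)(n−p+1)(p−1). -/
theorem stmt2 (n k p : ℕ) (hk : 2 ≤ k) (hn : 2*k ≤ n) (hp1 : k+1 ≤ p) (hp2 : p ≤ n-1) :
    (specRad (bipG n (p-1) (p-k+1)))^4
        - ((n:ℝ)*((n:ℝ)+(k:ℝ)-(p:ℝ)-1) + ((p:ℝ)-1)*((p:ℝ)-(k:ℝ)+1))
            * (specRad (bipG n (p-1) (p-k+1)))^2
        + ((n:ℝ)+(k:ℝ)-(p:ℝ)-1)*((p:ℝ)-(k:ℝ)+1)*((n:ℝ)-(p:ℝ)+1)*((p:ℝ)-1) = 0 ∧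
      ∀ x : ℝ, x^4 - ((n:ℝ)*((n:ℝ)+(k:ℝ)-(p:ℝ)-1) + ((p:ℝ)-1)*((p:ℝ)-(k:ℝ)+1)) * x^2
        + ((n:ℝ)+(k:ℝ)-(p:ℝ)-1)*((p:ℝ)-(k:ℝ)+1)*((n:ℝ)-(p:ℝ)+1)*((p:ℝ)-1) = 0 →
        x ≤ specRad (bipG n (p-1) (p-k+1)) :=
  stmt2_general n k p hk hp1 hp2
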